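/- (Theorem 5(i), second half.) If 0 < β·W < 1, then the threshold function p ↦ G(W, p; β) is strictly decreasing on [0, 1): for all 0 ≤ p₁ < p₂ < 1, G(W, p₁; β) > G(W, p₂; β). -/

import Mathlib

/- With `x = 1 / ((1 - p) W)` and `a = 2 β W - 1`, the threshold is
`G = 1/2 - x + √(x² + a x + 1/4)`, and `x` increases with `p`. The map `x ↦ √(x² + a x + c) - x`
is strictly decreasing as soon as `a² < 4 c`: then `x + a/2 < √(x² + a x + c)`, and squaring shows
that `√Q(x₂) < √Q(x₁) + (x₂ - x₁)` for `x₁ < x₂`. For `c = 1/4`, `a² < 1` is exactly `0 < β W < 1`. -/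

/-- The optimal-threshold function `G(W, p; β)` of Corollary 1, with
`R = 1 − (1−p)·W`. -/
noncomputable def G (W p β : ℝ) : ℝ :=
  let R := 1 - (1 - p) * W;
  -(1 + R) / (2 * (1 - R)) +
    Real.sqrt (R ^ 2 / (1 - R) ^ 2 + (R + 2 * β * W) / (1 - R) + 1 / 4)

section QuadraticSqrt

variable {a c : ℝ}

lemma add_half_lt_sqrt_sq_add_mul_add (h : a ^ 2 < 4 * c) (x : ℝ) :
    x + a / 2 < √(x ^ 2 + a * x + c) :=
  Real.lt_sqrt_of_sq_lt (by linear_combination h / 4)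

lemma strictAnti_sqrt_sq_add_mul_add_sub (h : a ^ 2 < 4 * c) :
    StrictAnti fun x : ℝ => √(x ^ 2 + a * x + c) - x := by
  intro x₁ x₂ hx
  have hQ : 0 ≤ x₁ ^ 2 + a * x₁ + c := by nlinarith [sq_nonneg (x₁ + a / 2)]
  have hsq := Real.sq_sqrt hQ
  have hslope := add_half_lt_sqrt_sq_add_mul_add h x₁
  suffices √(x₂ ^ 2 + a * x₂ + c) < √(x₁ ^ 2 + a * x₁ + c) + (x₂ - x₁) by
    dsimp only; linarith
  rw [Real.sqrt_lt' (by positivity [sub_pos.mpr hx])]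
  nlinarith [mul_lt_mul_of_pos_left hslope (sub_pos.mpr hx)]

end QuadraticSqrt

lemma G_eq_half_sub_inv_add_sqrt {W p : ℝ} (β : ℝ) (hq : (1 - p) * W ≠ 0) :
    G W p β = 1 / 2 - ((1 - p) * W)⁻¹ +
      √(((1 - p) * W)⁻¹ ^ 2 + (2 * β * W - 1) * ((1 - p) * W)⁻¹ + 1 / 4) := by
  simp only [G]
  generalize (1 - p) * W = q at hq ⊢
  rw [sub_sub_cancel]
  congr 2 <;> field_simp <;> ring

theorem G_strictAnti_in_p_general (β W : ℝ) (hW0 : 0 < W)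
    (h0 : 0 < β * W) (h1 : β * W < 1) :
    ∀ p₁ p₂ : ℝ, 0 ≤ p₁ → p₁ < p₂ → p₂ < 1 → G W p₂ β < G W p₁ β := by
  intro p₁ p₂ _ hlt hp₂
  have hq₂ : 0 < (1 - p₂) * W := mul_pos (by linarith) hW0
  have hq : (1 - p₂) * W < (1 - p₁) * W := by gcongr
  rw [G_eq_half_sub_inv_add_sqrt β hq₂.ne', G_eq_half_sub_inv_add_sqrt β (hq₂.trans hq).ne']
  have hdisc : (2 * β * W - 1) ^ 2 < 4 * (1 / 4) := by nlinarith
  have := strictAnti_sqrt_sq_add_mul_add_sub hdisc (inv_strictAnti₀ hq₂ hq)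
  linarith

/-- Theorem 5(i), second half: if `0 < β·W < 1` then `p ↦ G(W, p; β)` is strictly
decreasing on `[0, 1)`. -/
theorem G_strictAnti_in_p (β W : ℝ) (hβ : 0 ≤ β) (hW0 : 0 < W) (hW1 : W ≤ 1)
    (h0 : 0 < β * W) (h1 : β * W < 1) :
    ∀ p₁ p₂ : ℝ, 0 ≤ p₁ → p₁ < p₂ → p₂ < 1 → G W p₂ β < G W p₁ β :=
  G_strictAnti_in_p_general β W hW0 h0 h1
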